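/- Let M be a nonnegative irreducible real n×n matrix with n ≥ 1 and let B be a complex n×n matrix such that |B_{ij}| ≤ M_{ij} for all indices i, j, and suppose ρ(B) = ρ(M). If x ∈ ℂ^n is nonzero and B·x = λ·x for a complex number λ with |λ| = ρ(M), then the real vector |x| (with coordinates |x_i|) satisfies M·|x| = ρ(M)·|x|. -/

import Mathlib

open Matrix Polynomial

/-- The spectral radius of a complex square matrix: the maximum modulus of the roots
of its characteristic polynomial. -/
noncomputable def specRadC {n : ℕ} (B : Matrix (Fin n) (Fin n) ℂ) : ℝ :=
  sSup {r : ℝ | ∃ μ : ℂ, μ ∈ B.charpoly.roots ∧ ‖μ‖ = r}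

/-- The spectral radius of a real square matrix: the spectral radius of the matrix
regarded as a complex matrix. -/
noncomputable def specRad {n : ℕ} (A : Matrix (Fin n) (Fin n) ℝ) : ℝ :=
  specRadC (A.map (Complex.ofReal : ℝ → ℂ))

/-!
Since `|B| ≤ M` entrywise and `B x = λ x` with `|λ| = ρ(M)`, the triangle inequality gives
`ρ(M) |x| ≤ M |x|`. For irreducible `M` such a nonzero subinvariant vector must be an eigenvector:
some `P = I + M + ⋯ + M^N` has positive entries and commutes with `M`, so if
`w = M |x| - ρ(M) |x| ≥ 0` were nonzero, then `z = P |x| > 0` would satisfy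
`M z = ρ(M) z + P w ≥ (ρ(M) + ε) z` for some `ε > 0`. This contradicts the Collatz–Wielandt bound
(`c z ≤ M z` with `z > 0` forces `c ≤ ρ(M)`), which follows from Gelfand's formula because
`‖M ^ k‖ ≥ const · c ^ k`.
-/

open Filter Topology Finset

theorem ofReal_le_spectralRadius_of_mul_pow_le_norm_pow {A : Type*} [NormedRing A]
    [NormedAlgebra ℂ A] [CompleteSpace A] (a : A) {α c : ℝ} (hα : 0 < α) (hc : 0 ≤ c)
    (h : ∀ k : ℕ, α * c ^ k ≤ ‖a ^ k‖) : ENNReal.ofReal c ≤ spectralRadius ℂ a := by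
  have hroot : Tendsto (fun k : ℕ => α ^ (1 / k : ℝ) * c) atTop (𝓝 c) := by
    simpa using ((Real.continuousAt_const_rpow hα.ne').tendsto.comp
      tendsto_one_div_atTop_nhds_zero_nat).mul_const c
  refine le_of_tendsto_of_tendsto (ENNReal.tendsto_ofReal hroot)
    (spectrum.pow_norm_pow_one_div_tendsto_nhds_spectralRadius a) ?_
  filter_upwards [eventually_ne_atTop 0] with k hk
  refine ENNReal.ofReal_le_ofReal ?_
  calc α ^ (1 / k : ℝ) * c = (α * c ^ k) ^ (1 / k : ℝ) := by
        rw [Real.mul_rpow hα.le (by positivity), one_div, Real.pow_rpow_inv_natCast hc hk]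
    _ ≤ ‖a ^ k‖ ^ (1 / k : ℝ) := Real.rpow_le_rpow (by positivity) (h k) (by positivity)

theorem exists_pos_smul_le {ι : Type*} [Finite ι] {z y : ι → ℝ} (hy : ∀ i, 0 < y i) :
    ∃ ε : ℝ, 0 < ε ∧ ε • z ≤ y := by
  have hsmall : ∀ i, ∀ᶠ ε in 𝓝 (0 : ℝ), ε * z i < y i := fun i =>
    (continuous_id.mul continuous_const).tendsto' 0 0 (zero_mul _)
      |>.eventually (gt_mem_nhds (hy i))
  have hsmall' : ∀ᶠ ε in 𝓝[>] (0 : ℝ), (∀ i, ε * z i < y i) ∧ 0 < ε :=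
    ((eventually_all.2 hsmall).filter_mono nhdsWithin_le_nhds).and self_mem_nhdsWithin
  obtain ⟨ε, hε, hεpos⟩ := hsmall'.exists
  exact ⟨ε, hεpos, fun i => (hε i).le⟩

theorem specRadC_nonneg {n : ℕ} (B : Matrix (Fin n) (Fin n) ℂ) : 0 ≤ specRadC B :=
  Real.sSup_nonneg <| by rintro _ ⟨μ, -, rfl⟩; exact norm_nonneg μ

theorem specRad_nonneg {n : ℕ} (M : Matrix (Fin n) (Fin n) ℝ) : 0 ≤ specRad M :=
  specRadC_nonneg _

theorem spectralRadius_le_specRadC {n : ℕ} (B : Matrix (Fin n) (Fin n) ℂ) :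
    spectralRadius ℂ B ≤ ENNReal.ofReal (specRadC B) := by
  refine iSup₂_le fun μ hμ => ?_
  have hroot : μ ∈ B.charpoly.roots :=
    (mem_roots B.charpoly_monic.ne_zero).2 (mem_spectrum_iff_isRoot_charpoly.1 hμ)
  exact (ofReal_norm μ).symm.trans_le <| ENNReal.ofReal_le_ofReal
    (le_csSup (B.charpoly.roots.finite_toSet.image _).bddAbove ⟨μ, hroot, rfl⟩)

namespace Matrix

theorem norm_mulVec_apply_le {ι κ 𝕜 : Type*} [Fintype κ] [SeminormedRing 𝕜]
    {B : Matrix ι κ 𝕜} {M : Matrix ι κ ℝ} (hB : ∀ i j, ‖B i j‖ ≤ M i j) (x : κ → 𝕜)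
    (i : ι) : ‖(B *ᵥ x) i‖ ≤ (M *ᵥ fun j => ‖x j‖) i :=
  (norm_sum_le _ _).trans <| sum_le_sum fun j _ =>
    (norm_mul_le _ _).trans (mul_le_mul_of_nonneg_right (hB i j) (norm_nonneg _))

variable {ι : Type*} [Fintype ι]

theorem mulVec_apply_pos {P : Matrix ι ι ℝ} (hP : ∀ i j, 0 < P i j) {u : ι → ℝ} (hu : 0 ≤ u)
    (hu0 : u ≠ 0) (i : ι) : 0 < (P *ᵥ u) i := by
  obtain ⟨j, hj⟩ := Function.ne_iff.1 hu0
  exact sum_pos' (fun l _ => mul_nonneg (hP i l).le (hu l))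
    ⟨j, mem_univ j, mul_pos (hP i j) ((hu j).lt_of_ne' hj)⟩

variable {M : Matrix ι ι ℝ}

theorem mulVec_mono_of_nonneg (hM : ∀ i j, 0 ≤ M i j) {u v : ι → ℝ} (huv : u ≤ v) :
    M *ᵥ u ≤ M *ᵥ v := fun i =>
  sum_le_sum fun j _ => mul_le_mul_of_nonneg_left (huv j) (hM i j)

variable [DecidableEq ι]

theorem pow_smul_le_pow_mulVec (hM : ∀ i j, 0 ≤ M i j) {z : ι → ℝ} {c : ℝ} (hc : 0 ≤ c)
    (h : c • z ≤ M *ᵥ z) (k : ℕ) : c ^ k • z ≤ M ^ k *ᵥ z := by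
  induction k with
  | zero => simp
  | succ k ih =>
    calc c ^ (k + 1) • z = c ^ k • (c • z) := by rw [pow_succ, mul_smul]
      _ ≤ c ^ k • (M *ᵥ z) := smul_le_smul_of_nonneg_left h (pow_nonneg hc k)
      _ = M *ᵥ (c ^ k • z) := (mulVec_smul M _ z).symm
      _ ≤ M *ᵥ (M ^ k *ᵥ z) := mulVec_mono_of_nonneg hM ih
      _ = M ^ (k + 1) *ᵥ z := by rw [mulVec_mulVec, pow_succ']

theorem IsIrreducible.exists_sum_pow_apply_pos (hM : M.IsIrreducible) :
    ∃ N : ℕ, ∀ i j, 0 < (∑ m ∈ range N, M ^ m) i j := by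
  choose K _ hK using (isIrreducible_iff_exists_pow_pos hM.nonneg).1 hM
  set N := univ.sup fun p : ι × ι => K p.1 p.2
  have hKN : ∀ i j, K i j < N + 1 := fun i j =>
    Nat.lt_succ_of_le (le_sup (f := fun p : ι × ι => K p.1 p.2) (mem_univ (i, j)))
  refine ⟨N + 1, fun i j => ?_⟩
  rw [sum_apply]
  exact sum_pos' (fun m _ => pow_apply_nonneg hM.nonneg m i j)
    ⟨K i j, mem_range.2 (hKN i j), hK i j⟩

end Matrix

section LinftyNorm

attribute [local instance] Matrix.linftyOpNormedAddCommGroup Matrix.linftyOpNormedRing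
  Matrix.linftyOpNormedAlgebra

theorem le_specRad_of_smul_le_mulVec {n : ℕ} [NeZero n] {M : Matrix (Fin n) (Fin n) ℝ}
    (hM : ∀ i j, 0 ≤ M i j) {z : Fin n → ℝ} (hz : ∀ i, 0 < z i) {c : ℝ} (hc : 0 ≤ c)
    (h : c • z ≤ M *ᵥ z) : c ≤ specRad M := by
  set A := M.map (Complex.ofReal : ℝ → ℂ)
  set zC : Fin n → ℂ := fun i => z i
  have hzC : 0 < ‖zC‖ :=
    norm_pos_iff.2 fun h0 => (hz 0).ne' (by simpa [zC] using congrFun h0 0)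
  have hpow : ∀ k : ℕ, z 0 / ‖zC‖ * c ^ k ≤ ‖A ^ k‖ := fun k => by
    have hentry : (A ^ k *ᵥ zC) 0 = ((M ^ k *ᵥ z) 0 : ℝ) := by
      change (M.map Complex.ofRealHom ^ k *ᵥ _) 0 = _
      rw [← Matrix.map_pow _ Complex.ofRealHom]
      exact (Complex.ofRealHom.map_mulVec (M ^ k) z 0).symm
    have hlow : c ^ k * z 0 ≤ ‖A ^ k *ᵥ zC‖ :=
      calc c ^ k * z 0 ≤ (M ^ k *ᵥ z) 0 := pow_smul_le_pow_mulVec hM hc h k 0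
        _ ≤ ‖(A ^ k *ᵥ zC) 0‖ := by
          rw [hentry, Complex.norm_real, Real.norm_eq_abs]
          exact le_abs_self _
        _ ≤ ‖A ^ k *ᵥ zC‖ := norm_le_pi_norm _ 0
    rw [div_mul_eq_mul_div, div_le_iff₀ hzC, mul_comm (z 0)]
    exact hlow.trans (linfty_opNorm_mulVec _ _)
  have hsr := (ofReal_le_spectralRadius_of_mul_pow_le_norm_pow A (div_pos (hz 0) hzC) hc
    hpow).trans (spectralRadius_le_specRadC A)
  exact (ENNReal.ofReal_le_ofReal_iff (specRad_nonneg M)).1 hsr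

end LinftyNorm

theorem Matrix.IsIrreducible.mulVec_eq_specRad_smul_of_le {n : ℕ}
    {M : Matrix (Fin n) (Fin n) ℝ} (hM : M.IsIrreducible) {v : Fin n → ℝ} (hv : 0 ≤ v)
    (hv0 : v ≠ 0) (hsub : specRad M • v ≤ M *ᵥ v) : M *ᵥ v = specRad M • v := by
  obtain ⟨j, -⟩ := Function.ne_iff.1 hv0
  have : NeZero n := NeZero.of_pos j.pos
  set ρ := specRad M
  by_contra hne
  set w := M *ᵥ v - ρ • v
  obtain ⟨N, hP⟩ := hM.exists_sum_pow_apply_pos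
  set P := ∑ m ∈ range N, M ^ m
  have hPv := mulVec_apply_pos hP hv hv0
  have hPw := mulVec_apply_pos hP (sub_nonneg.2 hsub) (sub_ne_zero.2 hne)
  obtain ⟨ε, hε, hεle⟩ := exists_pos_smul_le (z := P *ᵥ v) hPw
  have hMP : M * P = P * M :=
    (Commute.sum_right _ _ _ fun m _ => (Commute.refl M).pow_right m).eq
  have hstrict : (ρ + ε) • (P *ᵥ v) ≤ M *ᵥ (P *ᵥ v) :=
    calc (ρ + ε) • (P *ᵥ v) = ρ • (P *ᵥ v) + ε • (P *ᵥ v) := add_smul _ _ _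
      _ ≤ ρ • (P *ᵥ v) + P *ᵥ w := by gcongr
      _ = M *ᵥ (P *ᵥ v) := by
        rw [mulVec_mulVec, hMP, ← mulVec_mulVec, mulVec_sub, mulVec_smul, add_sub_cancel]
  have hle : ρ + ε ≤ ρ :=
    le_specRad_of_smul_le_mulVec hM.nonneg hPv (add_nonneg (specRad_nonneg M) hε.le) hstrict
  linarith

theorem abs_eigenvector_of_specRad_eq_general {n : ℕ}
    (M : Matrix (Fin n) (Fin n) ℝ)
    (hM : ∀ i j, 0 ≤ M i j)
    (hirr : ∀ i j, ∃ k : ℕ, 1 ≤ k ∧ 0 < (M ^ k) i j)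
    (B : Matrix (Fin n) (Fin n) ℂ)
    (hB : ∀ i j, ‖B i j‖ ≤ M i j)
    (x : Fin n → ℂ) (hx : x ≠ 0) (lam : ℂ)
    (hBx : B.mulVec x = lam • x) (hlam : ‖lam‖ = specRad M) :
    M.mulVec (fun i => ‖x i‖) = specRad M • fun i => ‖x i‖ := by
  have hsub : specRad M • (fun i => ‖x i‖) ≤ M *ᵥ fun i => ‖x i‖ := fun i =>
    calc specRad M * ‖x i‖ = ‖(B *ᵥ x) i‖ := by rw [hBx, Pi.smul_apply, norm_smul, hlam]
      _ ≤ (M *ᵥ fun i => ‖x i‖) i := norm_mulVec_apply_le hB x i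
  have hMirr : M.IsIrreducible := (isIrreducible_iff_exists_pow_pos hM).2 hirr
  have hx' : (fun i => ‖x i‖) ≠ 0 := fun h => hx (funext fun i => norm_eq_zero.1 (congrFun h i))
  exact hMirr.mulVec_eq_specRad_smul_of_le (fun i => norm_nonneg (x i)) hx' hsub

theorem abs_eigenvector_of_specRad_eq {n : ℕ} (hn : 1 ≤ n)
    (M : Matrix (Fin n) (Fin n) ℝ)
    (hM : ∀ i j, 0 ≤ M i j)
    (hirr : ∀ i j, ∃ k : ℕ, 1 ≤ k ∧ 0 < (M ^ k) i j)
    (B : Matrix (Fin n) (Fin n) ℂ)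
    (hB : ∀ i j, ‖B i j‖ ≤ M i j)
    (heq : specRadC B = specRad M)
    (x : Fin n → ℂ) (hx : x ≠ 0) (lam : ℂ)
    (hBx : B.mulVec x = lam • x) (hlam : ‖lam‖ = specRad M) :
    M.mulVec (fun i => ‖x i‖) = specRad M • fun i => ‖x i‖ :=
  abs_eigenvector_of_specRad_eq_general M hM hirr B hB x hx lam hBx hlam
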